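/- Let a_0, ..., a_n be complex numbers (a_n ≠ 0) with |arg a_j − β| ≤ α ≤ π/2 for all j (β real), a_{-2} = a_{-1} = 0, and let t_1 > t_2 ≥ 0 and 0 ≤ k ≤ n be such that t_1 t_2|a_r| + (t_1 − t_2)|a_{r-1}| − |a_{r-2}| ≥ 0 for r = 1, ..., k+1 and ≤ 0 for r = k+2, ..., n. Then Σ_{ν=0}^{n} |a_ν t_1 t_2 + a_{ν-1}(t_1 − t_2) − a_{ν-2}| / t_1^{n−ν+1} ≤ (t_2|a_n| + |a_{n-1}|)(sin α − cos α) + (2 t_2|a_{k+1}| + 2|a_k|) cos α / t_1^{n-k-1} + 2 sin α Σ_{ν=0}^{n-2} |a_ν| / t_1^{n-ν-1}. -/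

import Mathlib

/-!
Put `D_ν = t₁t₂|a_ν| + (t₁-t₂)|a_{ν-1}| - |a_{ν-2}|`. Any two points of the sector make an
angle of at most `2α`, so for `P = t₁t₂a_ν + (t₁-t₂)a_{ν-1}`, `w = a_{ν-2}`, with
`X = t₁t₂|a_ν| + (t₁-t₂)|a_{ν-1}| ≥ |P|` and `Y = |w|`, one has
`|P - w|² ≤ X² + Y² - 2XY cos 2α ≤ (|X - Y| cos α + (X + Y) sin α)²`.
This bounds the `ν`-th term by `(|D_ν| cos α + (D_ν + 2|a_{ν-2}|) sin α) / t₁^{n-ν+1}`.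
The quotients `D_ν / t₁^{n+1-ν}` are the increments of `(t₂|a_{ν-1}| + |a_{ν-2}|) / t₁^{n+1-ν}`,
so their sum telescopes, and since `D_ν` changes sign only once, after `ν = k + 1`, so does the
sum of their absolute values.
-/

open ComplexConjugate

theorem Complex.re_mul_conj_eq_norm_mul_norm_mul_cos (z w : ℂ) :
    (z * conj w).re = ‖z‖ * ‖w‖ * Real.cos (z.arg - w.arg) := by
  rw [Real.cos_sub, mul_re, conj_re, conj_im, ← norm_mul_cos_arg z, ← norm_mul_sin_arg z,
    ← norm_mul_cos_arg w, ← norm_mul_sin_arg w]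
  ring

-- `arg 0 = 0` in Mathlib, so `0` is adjoined explicitly.
def sector (β α : ℝ) : Set ℂ := {z | z = 0 ∨ |z.arg - β| ≤ α}

theorem le_re_mul_conj_of_mem_sector {α β : ℝ} (hα : α ≤ Real.pi / 2) {z w : ℂ}
    (hz : z ∈ sector β α) (hw : w ∈ sector β α) :
    ‖z‖ * ‖w‖ * Real.cos (2 * α) ≤ (z * conj w).re := by
  rcases hz with rfl | hz
  · simp
  rcases hw with rfl | hw
  · simp
  rw [Complex.re_mul_conj_eq_norm_mul_norm_mul_cos, ← Real.cos_abs (z.arg - w.arg)]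
  gcongr
  refine Real.cos_le_cos_of_nonneg_of_le_pi (abs_nonneg _) (by linarith) ?_
  calc |z.arg - w.arg| ≤ |z.arg - β| + |w.arg - β| := by
        simpa only [abs_sub_comm β] using abs_sub_le z.arg β w.arg
    _ ≤ 2 * α := by linarith

theorem sq_le_sq_abs_sub_mul_cos_add_add_mul_sin {α X Y : ℝ} (hα0 : 0 ≤ α) (hα : α ≤ Real.pi / 2)
    (hX : 0 ≤ X) (hY : 0 ≤ Y) :
    X ^ 2 + Y ^ 2 - 2 * (X * Y * Real.cos (2 * α)) ≤
      (|X - Y| * Real.cos α + (X + Y) * Real.sin α) ^ 2 := by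
  have hcos : 0 ≤ Real.cos α := Real.cos_nonneg_of_mem_Icc ⟨by linarith [Real.pi_pos], hα⟩
  have hsin : 0 ≤ Real.sin α := Real.sin_nonneg_of_nonneg_of_le_pi hα0 (by linarith [Real.pi_pos])
  have hcross : 0 ≤ |X - Y| * (X + Y) * (Real.sin α * Real.cos α) := by positivity
  rw [Real.cos_two_mul']
  nlinarith [sq_abs (X - Y), Real.sin_sq_add_cos_sq α]

theorem norm_mul_add_mul_sub_le_of_mem_sector {α β : ℝ} (hα0 : 0 ≤ α) (hα : α ≤ Real.pi / 2)
    {u v w : ℂ} (hu : u ∈ sector β α) (hv : v ∈ sector β α) (hw : w ∈ sector β α)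
    {c₁ c₂ : ℝ} (hc₁ : 0 ≤ c₁) (hc₂ : 0 ≤ c₂) :
    ‖u * c₁ + v * c₂ - w‖ ≤
      |c₁ * ‖u‖ + c₂ * ‖v‖ - ‖w‖| * Real.cos α + (c₁ * ‖u‖ + c₂ * ‖v‖ + ‖w‖) * Real.sin α := by
  set X := c₁ * ‖u‖ + c₂ * ‖v‖
  have hP : ‖u * c₁ + v * c₂‖ ≤ X := by
    refine (norm_add_le _ _).trans_eq ?_
    simp only [norm_mul, Complex.norm_real, Real.norm_of_nonneg hc₁, Real.norm_of_nonneg hc₂, X]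
    ring
  have hre : X * ‖w‖ * Real.cos (2 * α) ≤ ((u * c₁ + v * c₂) * conj w).re := by
    have hu' := mul_le_mul_of_nonneg_left (le_re_mul_conj_of_mem_sector hα hu hw) hc₁
    have hv' := mul_le_mul_of_nonneg_left (le_re_mul_conj_of_mem_sector hα hv hw) hc₂
    have e : (u * c₁ + v * c₂) * conj w = c₁ * (u * conj w) + c₂ * (v * conj w) := by ring
    rw [e, Complex.add_re, Complex.re_ofReal_mul, Complex.re_ofReal_mul]
    linarith
  have hsq : ‖u * c₁ + v * c₂ - w‖ ^ 2 ≤ X ^ 2 + ‖w‖ ^ 2 - 2 * (X * ‖w‖ * Real.cos (2 * α)) := by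
    rw [Complex.sq_norm, Complex.normSq_sub, ← Complex.sq_norm, ← Complex.sq_norm]
    nlinarith [norm_nonneg (u * c₁ + v * c₂)]
  have hR := sq_le_sq_abs_sub_mul_cos_add_add_mul_sin (X := X) hα0 hα (by positivity)
    (norm_nonneg w)
  have hcos : 0 ≤ Real.cos α := Real.cos_nonneg_of_mem_Icc ⟨by linarith [Real.pi_pos], hα⟩
  have hsin : 0 ≤ Real.sin α := Real.sin_nonneg_of_nonneg_of_le_pi hα0 (by linarith [Real.pi_pos])
  exact pow_le_pow_iff_left₀ (norm_nonneg _) (by positivity) two_ne_zero |>.mp (hsq.trans hR)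

theorem Finset.sum_abs_le_of_sign_change (d : ℕ → ℝ) (s m : ℕ) (hpos : ∀ ν < s, 0 ≤ d ν)
    (hneg : ∀ ν, s ≤ ν → ν < m → d ν ≤ 0) :
    ∑ ν ∈ range m, |d ν| ≤ 2 * ∑ ν ∈ range s, d ν - ∑ ν ∈ range m, d ν := by
  rcases le_total s m with hsm | hms
  · rw [← sum_range_add_sum_Ico _ hsm, ← sum_range_add_sum_Ico _ hsm]
    have h₁ : ∑ ν ∈ range s, |d ν| = ∑ ν ∈ range s, d ν :=
      sum_congr rfl fun ν hν => abs_of_nonneg (hpos ν (mem_range.mp hν))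
    have h₂ : ∑ ν ∈ Ico s m, |d ν| = -∑ ν ∈ Ico s m, d ν := by
      rw [← sum_neg_distrib]
      exact sum_congr rfl fun ν hν => abs_of_nonpos (hneg ν (mem_Ico.mp hν).1 (mem_Ico.mp hν).2)
    linarith
  · have h₁ : ∑ ν ∈ range m, |d ν| = ∑ ν ∈ range m, d ν :=
      sum_congr rfl fun ν hν => abs_of_nonneg (hpos ν ((mem_range.mp hν).trans_le hms))
    have h₂ : ∑ ν ∈ range m, d ν ≤ ∑ ν ∈ range s, d ν :=
      sum_le_sum_of_subset_of_nonneg (range_subset_range.mpr hms)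
        fun ν hν _ => hpos ν (mem_range.mp hν)
    linarith

section Coefficients

variable (a : ℤ → ℂ) (t₁ t₂ : ℝ)

noncomputable def modulusCoeff (ν : ℤ) : ℝ :=
  t₁ * t₂ * ‖a ν‖ + (t₁ - t₂) * ‖a (ν - 1)‖ - ‖a (ν - 2)‖

noncomputable def potential (n ν : ℤ) : ℝ :=
  (t₂ * ‖a (ν - 1)‖ + ‖a (ν - 2)‖) / t₁ ^ (n + 1 - ν)

variable {a t₁ t₂}

theorem potential_succ_sub (ht₁ : t₁ ≠ 0) (n ν : ℤ) :
    potential a t₁ t₂ n (ν + 1) - potential a t₁ t₂ n ν =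
      modulusCoeff a t₁ t₂ ν / t₁ ^ (n + 1 - ν) := by
  have e : n + 1 - ν = (n + 1 - (ν + 1)) + 1 := by ring
  simp only [potential, modulusCoeff, add_sub_cancel_right, show ν + 1 - 2 = ν - 1 by ring]
  rw [e, zpow_add_one₀ ht₁]
  field_simp
  ring

theorem norm_coeff_le_of_mem_sector {α β : ℝ} (hα0 : 0 ≤ α) (hα : α ≤ Real.pi / 2)
    (ht₂ : 0 ≤ t₂) (ht : t₂ ≤ t₁) {ν : ℤ} (h₀ : a ν ∈ sector β α)
    (h₁ : a (ν - 1) ∈ sector β α) (h₂ : a (ν - 2) ∈ sector β α) :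
    ‖a ν * ((t₁ * t₂ : ℝ) : ℂ) + a (ν - 1) * ((t₁ - t₂ : ℝ) : ℂ) - a (ν - 2)‖ ≤
      |modulusCoeff a t₁ t₂ ν| * Real.cos α +
        (modulusCoeff a t₁ t₂ ν + 2 * ‖a (ν - 2)‖) * Real.sin α := by
  rw [modulusCoeff]
  convert norm_mul_add_mul_sub_le_of_mem_sector hα0 hα h₀ h₁ h₂
    (mul_nonneg (ht₂.trans ht) ht₂) (sub_nonneg.mpr ht) using 3
  ring

end Coefficients

section Telescoping

variable {a : ℤ → ℂ} {t₁ t₂ : ℝ}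

theorem modulusCoeff_zero (hm2 : a (-2) = 0) (hm1 : a (-1) = 0) :
    modulusCoeff a t₁ t₂ 0 = t₁ * t₂ * ‖a 0‖ := by
  simp [modulusCoeff, hm1, hm2]

theorem potential_zero (hm2 : a (-2) = 0) (hm1 : a (-1) = 0) (n : ℤ) :
    potential a t₁ t₂ n 0 = 0 := by
  simp [potential, hm1, hm2]

theorem norm_coeff_div_pow_le_of_mem_sector {α β : ℝ} (hα0 : 0 ≤ α) (hα : α ≤ Real.pi / 2)
    (ht₂ : 0 ≤ t₂) (ht : t₂ < t₁) {n ν : ℕ} (hν : ν ≤ n) (h₀ : a ν ∈ sector β α)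
    (h₁ : a (ν - 1) ∈ sector β α) (h₂ : a (ν - 2) ∈ sector β α) :
    ‖a ν * ((t₁ * t₂ : ℝ) : ℂ) + a (ν - 1) * ((t₁ - t₂ : ℝ) : ℂ) - a (ν - 2)‖ /
        t₁ ^ (n - ν + 1) ≤
      |potential a t₁ t₂ n (ν + 1) - potential a t₁ t₂ n ν| * Real.cos α +
        (potential a t₁ t₂ n (ν + 1) - potential a t₁ t₂ n ν) * Real.sin α +
        2 * Real.sin α * (‖a (ν - 2)‖ / t₁ ^ (n - ν + 1)) := by
  have ht₁ : 0 < t₁ := ht₂.trans_lt ht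
  have hpow : t₁ ^ ((n : ℤ) + 1 - ν) = t₁ ^ (n - ν + 1) := by
    rw [← zpow_natCast]
    push_cast [Nat.cast_sub hν]
    ring_nf
  rw [potential_succ_sub ht₁.ne', hpow, abs_div, abs_of_pos (pow_pos ht₁ _)]
  calc _ ≤ (|modulusCoeff a t₁ t₂ ν| * Real.cos α +
          (modulusCoeff a t₁ t₂ ν + 2 * ‖a (ν - 2)‖) * Real.sin α) / t₁ ^ (n - ν + 1) := by
        gcongr
        exact norm_coeff_le_of_mem_sector hα0 hα ht₂ ht.le h₀ h₁ h₂
    _ = _ := by ring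

theorem sum_range_potential_succ_sub (n : ℤ) (m : ℕ) :
    ∑ ν ∈ Finset.range m, (potential a t₁ t₂ n (ν + 1) - potential a t₁ t₂ n ν) =
      potential a t₁ t₂ n m - potential a t₁ t₂ n 0 := by
  simpa using Finset.sum_range_sub (fun ν : ℕ => potential a t₁ t₂ n ν) m

theorem sum_abs_potential_succ_sub_le (ht₁ : 0 < t₁) (n k : ℕ)
    (hpos : ∀ r : ℤ, 0 ≤ r → r ≤ k + 1 → 0 ≤ modulusCoeff a t₁ t₂ r)
    (hneg : ∀ r : ℤ, k + 2 ≤ r → r ≤ n → modulusCoeff a t₁ t₂ r ≤ 0) :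
    ∑ ν ∈ Finset.range (n + 1), |potential a t₁ t₂ n (ν + 1) - potential a t₁ t₂ n ν| ≤
      2 * potential a t₁ t₂ n (k + 2) - potential a t₁ t₂ n (n + 1) -
        potential a t₁ t₂ n 0 := by
  have hd (ν : ℕ) : potential a t₁ t₂ n (ν + 1) - potential a t₁ t₂ n ν =
      modulusCoeff a t₁ t₂ ν / t₁ ^ ((n : ℤ) + 1 - ν) :=
    potential_succ_sub ht₁.ne' n ν
  have h := Finset.sum_abs_le_of_sign_change
    (fun ν : ℕ => potential a t₁ t₂ n (ν + 1) - potential a t₁ t₂ n ν) (k + 2) (n + 1)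
    (fun ν hν => by
      rw [hd]
      exact div_nonneg (hpos ν (Int.natCast_nonneg ν) (by omega)) (zpow_pos ht₁ _).le)
    (fun ν hkν hνn => by
      rw [hd]
      exact div_nonpos_of_nonpos_of_nonneg (hneg ν (by omega) (by omega)) (zpow_pos ht₁ _).le)
  rw [sum_range_potential_succ_sub, sum_range_potential_succ_sub] at h
  push_cast at h
  linarith

theorem sum_range_norm_sub_two_div_pow (hm2 : a (-2) = 0) (hm1 : a (-1) = 0) (t : ℝ) (n : ℕ) :
    ∑ ν ∈ Finset.range (n + 1), ‖a (ν - 2)‖ / t ^ (n - ν + 1) =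
      ∑ ν ∈ Finset.range (n - 1), ‖a ν‖ / t ^ (n - ν - 1) := by
  cases n with
  | zero => simp [hm2]
  | succ m =>
    rw [Finset.sum_range_succ', Finset.sum_range_succ']
    norm_num [hm1, hm2]
    refine Finset.sum_congr rfl fun i hi => ?_
    have hi := Finset.mem_range.mp hi
    congr 2
    · ring_nf
    · omega

end Telescoping

theorem sum_estimate_thm17_general (n k : ℕ) (a : ℤ → ℂ)
    (α β : ℝ) (hα : α ≤ Real.pi / 2)
    (harg : ∀ j : ℤ, 0 ≤ j → j ≤ n → |Complex.arg (a j) - β| ≤ α)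
    (hm2 : a (-2) = 0) (hm1 : a (-1) = 0)
    (t1 t2 : ℝ) (ht : t1 > t2) (ht2 : 0 ≤ t2)
    (hc1 : ∀ r : ℤ, 1 ≤ r → r ≤ k + 1 →
      0 ≤ t1 * t2 * ‖a r‖ + (t1 - t2) * ‖a (r - 1)‖ -
        ‖a (r - 2)‖)
    (hc2 : ∀ r : ℤ, k + 2 ≤ r → r ≤ n →
      t1 * t2 * ‖a r‖ + (t1 - t2) * ‖a (r - 1)‖ -
        ‖a (r - 2)‖ ≤ 0) :
    ∑ ν ∈ Finset.range (n + 1),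
      ‖a ν * ((t1 * t2 : ℝ) : ℂ) + a (ν - 1) * ((t1 - t2 : ℝ) : ℂ) - a (ν - 2)‖ /
        t1 ^ (n - ν + 1) ≤
      (t2 * ‖a n‖ + ‖a (n - 1)‖) * (Real.sin α - Real.cos α)
      + (2 * t2 * ‖a (k + 1)‖ + 2 * ‖a k‖) * Real.cos α /
          t1 ^ ((n : ℤ) - k - 1)
      + 2 * Real.sin α * ∑ ν ∈ Finset.range (n - 1), ‖a ν‖ / t1 ^ (n - ν - 1) := by
  have ht1 : 0 < t1 := ht2.trans_lt ht
  have hα0 : 0 ≤ α := (abs_nonneg _).trans (harg 0 le_rfl (Int.natCast_nonneg n))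
  have hcos : 0 ≤ Real.cos α := Real.cos_nonneg_of_mem_Icc ⟨by linarith [Real.pi_pos], hα⟩
  have hsector (j : ℤ) (hj : -2 ≤ j) (hjn : j ≤ n) : a j ∈ sector β α := by
    rcases lt_or_ge j 0 with hneg | hnonneg
    · obtain rfl | rfl : j = -2 ∨ j = -1 := by omega
      exacts [Or.inl hm2, Or.inl hm1]
    · exact Or.inr (harg j hnonneg hjn)
  have hterm (ν : ℕ) (hν : ν ∈ Finset.range (n + 1)) :=
    have hνn : ν ≤ n := Finset.mem_range_succ_iff.mp hν
    norm_coeff_div_pow_le_of_mem_sector hα0 hα ht2 ht hνn (hsector _ (by omega) (by omega))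
      (hsector _ (by omega) (by omega)) (hsector _ (by omega) (by omega))
  have hpos (r : ℤ) (hr : 0 ≤ r) (hrk : r ≤ k + 1) : 0 ≤ modulusCoeff a t1 t2 r := by
    rcases hr.eq_or_lt with rfl | hr
    · rw [modulusCoeff_zero hm2 hm1]
      positivity
    · exact hc1 r hr hrk
  have habs := mul_le_mul_of_nonneg_right (sum_abs_potential_succ_sub_le ht1 n k hpos hc2) hcos
  have htop : potential a t1 t2 n (n + 1) = t2 * ‖a n‖ + ‖a (n - 1)‖ := by
    rw [potential, sub_self, zpow_zero, div_one]
    ring_nf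
  have hturn : 2 * potential a t1 t2 n (k + 2) * Real.cos α =
      (2 * t2 * ‖a (k + 1)‖ + 2 * ‖a k‖) * Real.cos α / t1 ^ ((n : ℤ) - k - 1) := by
    rw [potential]
    ring_nf
  refine (Finset.sum_le_sum hterm).trans ?_
  rw [Finset.sum_add_distrib, Finset.sum_add_distrib, ← Finset.sum_mul, ← Finset.sum_mul,
    ← Finset.mul_sum, sum_range_norm_sub_two_div_pow hm2 hm1, sum_range_potential_succ_sub,
    Nat.cast_succ]
  rw [potential_zero hm2 hm1, htop] at habs ⊢
  linarith

/-- The key summation estimate in the proof of Theorem 1.7. -/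
theorem sum_estimate_thm17 (n k : ℕ) (a : ℤ → ℂ) (han : a n ≠ 0) (hk : k ≤ n)
    (α β : ℝ) (hα : α ≤ Real.pi / 2)
    (harg : ∀ j : ℤ, 0 ≤ j → j ≤ n → |Complex.arg (a j) - β| ≤ α)
    (hm2 : a (-2) = 0) (hm1 : a (-1) = 0)
    (t1 t2 : ℝ) (ht : t1 > t2) (ht2 : 0 ≤ t2)
    (hc1 : ∀ r : ℤ, 1 ≤ r → r ≤ k + 1 →
      0 ≤ t1 * t2 * ‖a r‖ + (t1 - t2) * ‖a (r - 1)‖ -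
        ‖a (r - 2)‖)
    (hc2 : ∀ r : ℤ, k + 2 ≤ r → r ≤ n →
      t1 * t2 * ‖a r‖ + (t1 - t2) * ‖a (r - 1)‖ -
        ‖a (r - 2)‖ ≤ 0) :
    ∑ ν ∈ Finset.range (n + 1),
      ‖a ν * ((t1 * t2 : ℝ) : ℂ) + a (ν - 1) * ((t1 - t2 : ℝ) : ℂ) - a (ν - 2)‖ /
        t1 ^ (n - ν + 1) ≤
      (t2 * ‖a n‖ + ‖a (n - 1)‖) * (Real.sin α - Real.cos α)
      + (2 * t2 * ‖a (k + 1)‖ + 2 * ‖a k‖) * Real.cos α /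
          t1 ^ ((n : ℤ) - k - 1)
      + 2 * Real.sin α * ∑ ν ∈ Finset.range (n - 1), ‖a ν‖ / t1 ^ (n - ν - 1) :=
  sum_estimate_thm17_general n k a α β hα harg hm2 hm1 t1 t2 ht ht2 hc1 hc2
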